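/- Let c ≥ 0 and β < 0. Then f_{c,β} attains its infimum on (0, ∞); denote Ω(c, β) = min_{λ>0} f_{c,β}(λ). For each g > 0: if g > Ω(c, β) then the equation f_{c,β}(λ) = g has exactly two solutions λ > 0; if g = Ω(c, β) it has exactly one solution λ > 0; and if g < Ω(c, β) it has no solutions λ > 0. -/

import Mathlib

/-!
On `λ > 0` one has `f_{c,β}(λ) = u(λ) q(λ)` with `u(λ) = 1/(2λ) - 2βλ` and
`q(λ) = e^{c/2} + (e^{c/2} - 1) h(λ)`, `h(λ) = 1/(e^{2πλ} - 1)`. Since `q ≥ 1`, `f ≥ u` tends to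
`+∞` at both ends of `(0, ∞)`. Moreover `f` is strictly convex: in `f'' = u''q + 2u'q' + uq''`,
after expanding, every term is nonnegative and `q/λ³` is positive, except for the `β`-part
`-2β (2q' + λq'')`, which is a nonnegative multiple of `2πλ (1 + 2h) - 2`; its sign is the
inequality `t ≥ 2 tanh (t/2)`. A strictly convex function tending to `+∞` at both ends of an
interval has a unique minimiser, decreases strictly before it and increases strictly after it, so
by the intermediate value theorem every level above the minimum is attained exactly twice.
-/

/-- `ρ_c(λ) = (e^{2πλ} - 1)/(e^{2πλ + c/2} - 1)`. -/
noncomputable def rhoC (c lam : ℝ) : ℝ :=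
  (Real.exp (2 * Real.pi * lam) - 1) / (Real.exp (2 * Real.pi * lam + c / 2) - 1)

/-- `f_{c,β}(λ) = (1 - 4βλ²)/(2λ ρ_c(λ))`. -/
noncomputable def fCB (c β lam : ℝ) : ℝ := (1 - 4 * β * lam ^ 2) / (2 * lam * rhoC c lam)

open Real Set Filter Topology

section StrictConvexMinimum

variable {E : Type*} [AddCommGroup E] [Module ℝ E] {s : Set E} {f : E → ℝ} {a : E}

lemma StrictConvexOn.lt_of_isMinOn (hf : StrictConvexOn ℝ s f) (hmin : IsMinOn f s a)
    (ha : a ∈ s) {y : E} (hy : y ∈ s) (hya : y ≠ a) : f a < f y :=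
  (hmin hy).lt_of_ne fun h ↦ hya <| hf.eq_of_isMinOn (fun _ hz ↦ h ▸ hmin hz) hmin hy ha

lemma StrictConvexOn.lt_of_isMinOn_of_mem_openSegment (hf : StrictConvexOn ℝ s f)
    (hmin : IsMinOn f s a) (ha : a ∈ s) {x y : E} (hy : y ∈ s) (hay : a ≠ y)
    (hx : x ∈ openSegment ℝ a y) : f x < f y := by
  have hlt := hf.lt_on_openSegment ha hy hay hx
  have hle : f a ≤ f x := hmin (hf.1.openSegment_subset ha hy hx)
  grind

end StrictConvexMinimum

section StrictConvexMinimumReal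

variable {s : Set ℝ} {f : ℝ → ℝ} {a : ℝ}

lemma StrictConvexOn.strictMonoOn_of_isMinOn (hf : StrictConvexOn ℝ s f)
    (hmin : IsMinOn f s a) (ha : a ∈ s) : StrictMonoOn f (s ∩ Ici a) := by
  rintro x ⟨hx, hax : a ≤ x⟩ y ⟨hy, -⟩ hxy
  rcases hax.eq_or_lt with rfl | hax
  · exact hf.lt_of_isMinOn hmin ha hy hxy.ne'
  · refine hf.lt_of_isMinOn_of_mem_openSegment hmin ha hy (hax.trans hxy).ne ?_
    rw [openSegment_eq_Ioo (hax.trans hxy)]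
    exact ⟨hax, hxy⟩

lemma StrictConvexOn.strictAntiOn_of_isMinOn (hf : StrictConvexOn ℝ s f)
    (hmin : IsMinOn f s a) (ha : a ∈ s) : StrictAntiOn f (s ∩ Iic a) := by
  rintro x ⟨hx, -⟩ y ⟨hy, hya : y ≤ a⟩ hxy
  rcases hya.eq_or_lt with rfl | hya
  · exact hf.lt_of_isMinOn hmin hy hx hxy.ne
  · refine hf.lt_of_isMinOn_of_mem_openSegment hmin ha hx (hxy.trans hya).ne' ?_
    rw [openSegment_symm, openSegment_eq_Ioo (hxy.trans hya)]
    exact ⟨hxy, hya⟩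

end StrictConvexMinimumReal

section CoerciveOnIoi

variable {f : ℝ → ℝ} {b : ℝ}

lemma ContinuousOn.exists_isMinOn_Ioi (hf : ContinuousOn f (Ioi b))
    (hb : Tendsto f (𝓝[>] b) atTop) (htop : Tendsto f atTop atTop) :
    ∃ a ∈ Ioi b, IsMinOn f (Ioi b) a := by
  obtain ⟨ε, hbε, hε⟩ : ∃ ε ∈ Ioi b, Ioc b ε ⊆ {x | f (b + 1) ≤ f x} :=
    mem_nhdsGT_iff_exists_Ioc_subset.mp (hb.eventually_ge_atTop _)
  obtain ⟨M, hM⟩ := eventually_atTop.mp (htop.eventually_ge_atTop (f (b + 1)))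
  have hK : Icc (min ε (b + 1)) (max M (b + 1)) ⊆ Ioi b :=
    fun x hx ↦ lt_of_lt_of_le (lt_min hbε (by linarith)) hx.1
  obtain ⟨a, haK, hmin⟩ := isCompact_Icc.exists_isMinOn
    (nonempty_Icc.mpr ((min_le_right _ _).trans (le_max_right _ _))) (hf.mono hK)
  have h1 : f a ≤ f (b + 1) := hmin ⟨min_le_right _ _, le_max_right _ _⟩
  refine ⟨a, hK haK, fun x (hx : b < x) ↦ ?_⟩
  by_cases hxε : x ≤ min ε (b + 1)
  · exact h1.trans (hε ⟨hx, hxε.trans (min_le_left _ _)⟩)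
  by_cases hxM : max M (b + 1) ≤ x
  · exact h1.trans (hM x ((le_max_left _ _).trans hxM))
  exact hmin ⟨(not_le.mp hxε).le, (not_le.mp hxM).le⟩

theorem StrictConvexOn.exists_isLeast_image_and_encard_level_sets
    (hf : StrictConvexOn ℝ (Ioi b) f) (hb : Tendsto f (𝓝[>] b) atTop)
    (htop : Tendsto f atTop atTop) :
    ∃ Ω : ℝ, IsLeast (f '' Ioi b) Ω ∧ ∀ g : ℝ,
      (Ω < g → {x : ℝ | b < x ∧ f x = g}.encard = 2) ∧
      (g = Ω → {x : ℝ | b < x ∧ f x = g}.encard = 1) ∧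
      (g < Ω → {x : ℝ | b < x ∧ f x = g} = ∅) := by
  have hcont : ContinuousOn f (Ioi b) := hf.convexOn.continuousOn isOpen_Ioi
  obtain ⟨a, ha, hmin⟩ := hcont.exists_isMinOn_Ioi hb htop
  have hanti := hf.strictAntiOn_of_isMinOn hmin ha
  have hmono := hf.strictMonoOn_of_isMinOn hmin ha
  refine ⟨f a, ⟨mem_image_of_mem f ha, forall_mem_image.mpr hmin⟩, fun g ↦ ⟨fun hag ↦ ?_, ?_, ?_⟩⟩
  · obtain ⟨x₁, hx₁g, hbx₁, hx₁a⟩ : ∃ x, g < f x ∧ b < x ∧ x < a :=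
      ((hb.eventually_gt_atTop g).and (Ioo_mem_nhdsGT ha)).exists
    obtain ⟨s₁, ⟨hxs₁, hs₁a⟩, hs₁⟩ :=
      intermediate_value_Ioo' hx₁a.le (hcont.mono fun x hx ↦ hbx₁.trans_le hx.1) ⟨hag, hx₁g⟩
    obtain ⟨x₂, hx₂g, hax₂⟩ : ∃ x, g < f x ∧ a < x :=
      ((htop.eventually_gt_atTop g).and (eventually_gt_atTop a)).exists
    obtain ⟨s₂, ⟨has₂, -⟩, hs₂⟩ :=
      intermediate_value_Ioo hax₂.le (hcont.mono fun x hx ↦ ha.trans_le hx.1) ⟨hag, hx₂g⟩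
    have hbs₁ : b < s₁ := hbx₁.trans hxs₁
    have hbs₂ : b < s₂ := ha.trans has₂
    suffices {x : ℝ | b < x ∧ f x = g} = {s₁, s₂} by
      rw [this, encard_pair (hs₁a.trans has₂).ne]
    ext x
    refine ⟨fun ⟨hbx, hx⟩ ↦ ?_, ?_⟩
    · rcases le_total x a with hxa | hax
      · exact Or.inl (hanti.injOn ⟨hbx, hxa⟩ ⟨hbs₁, hs₁a.le⟩ (hx.trans hs₁.symm))
      · exact Or.inr (hmono.injOn ⟨hbx, hax⟩ ⟨hbs₂, has₂.le⟩ (hx.trans hs₂.symm))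
    · rintro (rfl | rfl)
      exacts [⟨hbs₁, hs₁⟩, ⟨hbs₂, hs₂⟩]
  · rintro rfl
    suffices {x : ℝ | b < x ∧ f x = f a} = {a} by rw [this, encard_singleton]
    ext x
    refine ⟨fun ⟨hbx, hx⟩ ↦ ?_, by rintro rfl; exact ⟨ha, rfl⟩⟩
    by_contra hxa
    exact (hf.lt_of_isMinOn hmin ha hbx hxa).ne' hx
  · intro hga
    refine eq_empty_of_forall_notMem fun x ⟨hbx, hx⟩ ↦ ?_
    exact (hx ▸ hga).not_ge (hmin hbx)

end CoerciveOnIoi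

lemma strictConvexOn_of_hasDerivAt2_pos {D : Set ℝ} (hD : Convex ℝ D) (hDo : IsOpen D)
    {f f' f'' : ℝ → ℝ} (hf : ∀ x ∈ D, HasDerivAt f (f' x) x)
    (hf' : ∀ x ∈ D, HasDerivAt f' (f'' x) x) (hf''_pos : ∀ x ∈ D, 0 < f'' x) :
    StrictConvexOn ℝ D f := by
  refine StrictMonoOn.strictConvexOn_of_deriv hD
    (fun x hx ↦ (hf x hx).continuousAt.continuousWithinAt) ?_
  rw [hDo.interior_eq]
  refine (strictMonoOn_of_deriv_pos hD (fun x hx ↦ (hf' x hx).continuousAt.continuousWithinAt)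
    fun x hx ↦ ?_).congr fun x hx ↦ ((hf x hx).deriv).symm
  rw [hDo.interior_eq] at hx
  exact (hf' x hx).deriv ▸ hf''_pos x hx

noncomputable def bose (x : ℝ) : ℝ := (exp x - 1)⁻¹

lemma bose_pos {x : ℝ} (hx : 0 < x) : 0 < bose x :=
  inv_pos.mpr (sub_pos.mpr (one_lt_exp_iff.mpr hx))

lemma hasDerivAt_bose {x : ℝ} (hx : x ≠ 0) : HasDerivAt bose (-(bose x * (1 + bose x))) x := by
  have hE : exp x - 1 ≠ 0 := by simpa [sub_eq_zero] using hx
  refine ((hasDerivAt_exp x).sub_const 1).inv hE |>.congr_deriv ?_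
  unfold bose
  field_simp
  ring

lemma hasDerivAt_bose_const_mul (k : ℝ) {x : ℝ} (hkx : k * x ≠ 0) :
    HasDerivAt (fun y ↦ bose (k * y)) (-(k * (bose (k * x) * (1 + bose (k * x))))) x :=
  ((hasDerivAt_bose hkx).comp x ((hasDerivAt_id x).const_mul k)).congr_deriv (by simp; ring)

lemma hasDerivAt_bose_mul_one_add_bose_const_mul (k : ℝ) {x : ℝ} (hkx : k * x ≠ 0) :
    HasDerivAt (fun y ↦ bose (k * y) * (1 + bose (k * y)))
      (-(k * (bose (k * x) * (1 + bose (k * x)) * (1 + 2 * bose (k * x))))) x := by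
  have h := hasDerivAt_bose_const_mul k hkx
  exact (h.mul (h.const_add 1)).congr_deriv (by ring)

lemma two_mul_exp_sub_one_le {x : ℝ} (hx : 0 ≤ x) : 2 * (exp x - 1) ≤ x * (exp x + 1) := by
  have hderiv (y : ℝ) : HasDerivAt (fun y ↦ y * (exp y + 1) - 2 * (exp y - 1))
      (1 + (y - 1) * exp y) y := by
    have := (hasDerivAt_id y).mul ((hasDerivAt_exp y).add_const 1) |>.sub
      (((hasDerivAt_exp y).sub_const 1).const_mul 2)
    exact this.congr_deriv (by simp; ring)
  have hmono : Monotone (fun y ↦ y * (exp y + 1) - 2 * (exp y - 1)) := by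
    refine monotone_of_deriv_nonneg (fun y ↦ (hderiv y).differentiableAt) fun y ↦ ?_
    rw [(hderiv y).deriv]
    have h1 : 1 - y ≤ exp (-y) := by linarith [add_one_le_exp (-y)]
    have h2 : exp (-y) * exp y = 1 := by rw [← exp_add, neg_add_cancel, exp_zero]
    nlinarith [exp_pos y]
  simpa using hmono hx

lemma two_le_mul_one_add_two_mul_bose {x : ℝ} (hx : 0 < x) : 2 ≤ x * (1 + 2 * bose x) := by
  have hE : 0 < exp x - 1 := sub_pos.mpr (one_lt_exp_iff.mpr hx)
  have h : 1 + 2 * bose x = (exp x + 1) / (exp x - 1) := by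
    unfold bose
    field_simp
    ring
  rw [h, mul_div_assoc', le_div_iff₀ hE]
  linarith [two_mul_exp_sub_one_le hx.le]

lemma hasDerivAt_inv_two_mul_sub_mul (β : ℝ) {x : ℝ} (hx : x ≠ 0) :
    HasDerivAt (fun y ↦ (2 * y)⁻¹ - 2 * β * y) (-(2 * x ^ 2)⁻¹ - 2 * β) x := by
  have := (((hasDerivAt_id x).const_mul 2).inv (by simp [hx])).sub
    ((hasDerivAt_id x).const_mul (2 * β))
  exact this.congr_deriv (by simp; field_simp)

lemma hasDerivAt_neg_inv_two_mul_sq_sub (β : ℝ) {x : ℝ} (hx : x ≠ 0) :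
    HasDerivAt (fun y ↦ -(2 * y ^ 2)⁻¹ - 2 * β) ((x ^ 3)⁻¹) x := by
  have := (((hasDerivAt_pow 2 x).const_mul 2).inv (by simp [hx])).neg.sub_const (2 * β)
  exact this.congr_deriv (by field_simp; ring)

lemma fCB_eq_mul (c β : ℝ) {l : ℝ} (hl : 0 < l) :
    fCB c β l =
      ((2 * l)⁻¹ - 2 * β * l) * (exp (c / 2) + (exp (c / 2) - 1) * bose (2 * π * l)) := by
  have hE : exp (2 * π * l) - 1 ≠ 0 := (sub_pos.mpr (one_lt_exp_iff.mpr (by positivity))).ne'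
  have hq : exp (c / 2) + (exp (c / 2) - 1) * bose (2 * π * l)
      = (exp (2 * π * l + c / 2) - 1) / (exp (2 * π * l) - 1) := by
    unfold bose
    rw [exp_add]
    field_simp
    ring
  rw [hq, fCB, rhoC, mul_div_assoc', div_div_eq_mul_div]
  field_simp
  ring

lemma strictConvexOn_fCB {c β : ℝ} (hc : 0 ≤ c) (hβ : β < 0) :
    StrictConvexOn ℝ (Ioi 0) (fCB c β) := by
  set A := exp (c / 2)
  have hA : 0 ≤ A - 1 := sub_nonneg.mpr (one_le_exp (by positivity))
  have h2πx {x : ℝ} (hx : x ∈ Ioi 0) : 2 * π * x ≠ 0 := (mul_pos two_pi_pos hx).ne'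
  have hu (x : ℝ) (hx : x ∈ Ioi 0) := hasDerivAt_inv_two_mul_sub_mul β (ne_of_gt hx)
  have hu' (x : ℝ) (hx : x ∈ Ioi 0) := hasDerivAt_neg_inv_two_mul_sq_sub β (ne_of_gt hx)
  have hq (x : ℝ) (hx : x ∈ Ioi 0) :=
    ((hasDerivAt_bose_const_mul (2 * π) (h2πx hx)).const_mul (A - 1)).const_add A
  have hq' (x : ℝ) (hx : x ∈ Ioi 0) :=
    (hasDerivAt_bose_mul_one_add_bose_const_mul (2 * π) (h2πx hx)).const_mul (-(2 * π * (A - 1)))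
  refine (strictConvexOn_of_hasDerivAt2_pos (convex_Ioi 0) isOpen_Ioi
    (fun x hx ↦ ((hu x hx).mul (hq x hx)).congr_deriv ?_)
    (fun x hx ↦ ((hu' x hx).mul (hq x hx)).add ((hu x hx).mul (hq' x hx))) ?_).congr
    fun x hx ↦ (fCB_eq_mul c β hx).symm
  · simp only [Pi.add_apply, Pi.mul_apply]
    ring
  · intro x (hx : 0 < x)
    have hb : 0 < bose (2 * π * x) := bose_pos (by positivity)
    set b := bose (2 * π * x)
    have key : 2 ≤ 2 * π * x * (1 + 2 * b) := two_le_mul_one_add_two_mul_bose (by positivity)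
    have hpos : 0 < (x ^ 3)⁻¹ * (A + (A - 1) * b) + (x ^ 2)⁻¹ * (2 * π * (A - 1) * (b * (1 + b)))
        + x⁻¹ * (2 * π ^ 2 * (A - 1) * (b * (1 + b)) * (1 + 2 * b)) := by positivity
    have hβ_term : 0 ≤ -β * (4 * π * (A - 1) * (b * (1 + b))) * (2 * π * x * (1 + 2 * b) - 2) :=
      mul_nonneg (mul_nonneg (neg_nonneg.mpr hβ.le) (by positivity)) (sub_nonneg.mpr key)
    refine (add_pos_of_pos_of_nonneg hpos hβ_term).trans_eq ?_
    ring

lemma inv_two_mul_sub_le_fCB {c β l : ℝ} (hc : 0 ≤ c) (hβ : β ≤ 0) (hl : 0 < l) :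
    (2 * l)⁻¹ - 2 * β * l ≤ fCB c β l := by
  rw [fCB_eq_mul c β hl]
  have hu : 0 ≤ (2 * l)⁻¹ - 2 * β * l := by
    nlinarith [inv_pos.mpr (mul_pos two_pos hl)]
  have hq : 1 ≤ exp (c / 2) + (exp (c / 2) - 1) * bose (2 * π * l) := by
    have hA : 1 ≤ exp (c / 2) := one_le_exp (by positivity)
    nlinarith [bose_pos (by positivity : 0 < 2 * π * l)]
  exact le_mul_of_one_le_right hu hq

lemma tendsto_fCB_nhdsGT_zero {c β : ℝ} (hc : 0 ≤ c) (hβ : β ≤ 0) :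
    Tendsto (fCB c β) (𝓝[>] 0) atTop := by
  refine tendsto_atTop_mono' _ ?_ (tendsto_inv_nhdsGT_zero.const_mul_atTop (inv_pos.mpr two_pos))
  filter_upwards [self_mem_nhdsWithin] with l (hl : 0 < l)
  rw [← mul_inv]
  linarith [inv_two_mul_sub_le_fCB hc hβ hl, mul_nonneg (neg_nonneg.mpr hβ) hl.le]

lemma tendsto_fCB_atTop {c β : ℝ} (hc : 0 ≤ c) (hβ : β < 0) : Tendsto (fCB c β) atTop atTop := by
  refine tendsto_atTop_mono' _ ?_ (tendsto_id.const_mul_atTop (by linarith : 0 < -2 * β))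
  filter_upwards [eventually_gt_atTop 0] with l hl
  show -2 * β * l ≤ fCB c β l
  linarith [inv_two_mul_sub_le_fCB hc hβ.le hl, inv_pos.mpr (mul_pos two_pos hl)]

/-- For `β < 0`, `f_{c,β}` attains its minimum `Ω(c,β)` on `(0,∞)`, and the equation
`f_{c,β}(λ) = g` has exactly two positive solutions when `g > Ω(c,β)`, exactly one when
`g = Ω(c,β)`, and none when `g < Ω(c,β)`. -/
theorem rotating_waves_stmt_8 (c β : ℝ) (hc : 0 ≤ c) (hβ : β < 0) :
    ∃ Ω : ℝ, IsLeast (fCB c β '' Set.Ioi 0) Ω ∧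
      ∀ g : ℝ, 0 < g →
        (Ω < g → {lam : ℝ | 0 < lam ∧ fCB c β lam = g}.encard = 2) ∧
        (g = Ω → {lam : ℝ | 0 < lam ∧ fCB c β lam = g}.encard = 1) ∧
        (g < Ω → {lam : ℝ | 0 < lam ∧ fCB c β lam = g} = ∅) := by
  obtain ⟨Ω, hΩ, hlevel⟩ := (strictConvexOn_fCB hc hβ).exists_isLeast_image_and_encard_level_sets
    (tendsto_fCB_nhdsGT_zero hc hβ.le) (tendsto_fCB_atTop hc hβ)
  exact ⟨Ω, hΩ, fun g _ ↦ hlevel g⟩
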